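/- Let w : L → ℝ, let ℓ* ∈ L satisfy w(ℓ*) ≥ 0, and let w₁ be the decomposed weight determined by w and ℓ*. Let S ⊆ L be a feasible subset such that either ℓ* ∈ S or S ∪ {ℓ*} is infeasible, and suppose that either ℓ* is light, or ℓ* is heavy and every ℓ ∈ S with es(ℓ) = es(ℓ*) is heavy. Then for every feasible subset Q ⊆ L, w₁(S) ≥ (1/6)·w₁(Q). -/
import Mathlib


/-- A subset `S` of the set of assignment instances is feasible if, at every edge
server, the total normalized bandwidth and computation demands are at most `1`,
and each job has at most one instance selected. -/
def Feasible {L J K : Type*} [DecidableEq L] [DecidableEq J] [DecidableEq K]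
    (b c : L → ℝ) (job : L → J) (es : L → K) (S : Finset L) : Prop :=
  (∀ k : K, ∑ ℓ ∈ S.filter (fun ℓ => es ℓ = k), b ℓ ≤ 1) ∧
  (∀ k : K, ∑ ℓ ∈ S.filter (fun ℓ => es ℓ = k), c ℓ ≤ 1) ∧
  (∀ j : J, (S.filter (fun ℓ => job ℓ = j)).card ≤ 1)

/-- An instance is light if both its normalized demands are at most `1/2`. -/
def Light {L : Type*} (b c : L → ℝ) (ℓ : L) : Prop :=
  b ℓ ≤ 1 / 2 ∧ c ℓ ≤ 1 / 2

/-- The decomposed weight `w₁` determined by a weight function `w` and a fixed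
instance `ℓstar`. -/
def decompose {L J K : Type*} [DecidableEq J] [DecidableEq K]
    (b c : L → ℝ) (job : L → J) (es : L → K) (w : L → ℝ) (ℓstar : L) (ℓ : L) : ℝ :=
  if job ℓ = job ℓstar then w ℓstar
  else if es ℓ = es ℓstar then w ℓstar * (b ℓ + c ℓ)
  else 0

/-- Suppose `w(ℓ*) ≥ 0`, `S` is feasible, either `ℓ* ∈ S` or
`S ∪ {ℓ*}` is infeasible, and either `ℓ*` is light, or `ℓ*` is heavy and every
instance of `S` on the edge server `es(ℓ*)` is heavy. Then `w₁(S) ≥ (1/6)·w₁(Q)`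
for every feasible subset `Q`. -/
theorem decompose_sum_ge_sixth
    {L J K : Type*} [Fintype L] [DecidableEq L] [Fintype J] [DecidableEq J]
    [Fintype K] [DecidableEq K]
    (b c : L → ℝ) (job : L → J) (es : L → K)
    (hb : ∀ ℓ : L, 0 < b ℓ ∧ b ℓ ≤ 1) (hc : ∀ ℓ : L, 0 < c ℓ ∧ c ℓ ≤ 1)
    (w : L → ℝ) (ℓstar : L) (hw : 0 ≤ w ℓstar)
    (S : Finset L) (hS : Feasible b c job es S)
    (hblock : ℓstar ∈ S ∨ ¬ Feasible b c job es (insert ℓstar S))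
    (hcase : Light b c ℓstar ∨
      (¬ Light b c ℓstar ∧ ∀ ℓ ∈ S, es ℓ = es ℓstar → ¬ Light b c ℓ)) :
    ∀ Q : Finset L, Feasible b c job es Q →
      (1 / 6) * (∑ ℓ ∈ Q, decompose b c job es w ℓstar ℓ) ≤
        ∑ ℓ ∈ S, decompose b c job es w ℓstar ℓ := by
  classical
  intro Q hQ
  have hpos : ∀ ℓ : L, 0 ≤ decompose b c job es w ℓstar ℓ := by
    intro ℓ
    unfold decompose
    split_ifs with h1 h2
    · exact hw
    · exact mul_nonneg hw (by nlinarith [(hb ℓ).1, (hc ℓ).1])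
    · exact le_refl 0
  -- Upper bound on the Q sum
  have hQub : ∑ ℓ ∈ Q, decompose b c job es w ℓstar ℓ ≤ 3 * w ℓstar := by
    rw [← Finset.sum_filter_add_sum_filter_not Q (fun ℓ => job ℓ = job ℓstar)]
    have h1 : ∑ ℓ ∈ Q.filter (fun ℓ => job ℓ = job ℓstar),
        decompose b c job es w ℓstar ℓ ≤ w ℓstar := by
      have he : ∀ ℓ ∈ Q.filter (fun ℓ => job ℓ = job ℓstar),
          decompose b c job es w ℓstar ℓ = w ℓstar := by
        intro ℓ hℓ
        simp [decompose, (Finset.mem_filter.mp hℓ).2]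
      rw [Finset.sum_congr rfl he, Finset.sum_const, nsmul_eq_mul]
      have hcard : ((Q.filter (fun ℓ => job ℓ = job ℓstar)).card : ℝ) ≤ 1 := by
        exact_mod_cast hQ.2.2 (job ℓstar)
      nlinarith
    have h2 : ∑ ℓ ∈ Q.filter (fun ℓ => ¬ job ℓ = job ℓstar),
        decompose b c job es w ℓstar ℓ ≤ 2 * w ℓstar := by
      have he : ∀ ℓ ∈ Q.filter (fun ℓ => ¬ job ℓ = job ℓstar),
          decompose b c job es w ℓstar ℓ =
            if es ℓ = es ℓstar then w ℓstar * (b ℓ + c ℓ) else 0 := by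
        intro ℓ hℓ
        simp [decompose, (Finset.mem_filter.mp hℓ).2]
      rw [Finset.sum_congr rfl he, Finset.sum_ite, Finset.sum_const_zero, add_zero]
      have hsub : (Q.filter (fun ℓ => ¬ job ℓ = job ℓstar)).filter
          (fun ℓ => es ℓ = es ℓstar) ⊆ Q.filter (fun ℓ => es ℓ = es ℓstar) := by
        intro ℓ hℓ
        simp only [Finset.mem_filter] at hℓ ⊢
        exact ⟨hℓ.1.1, hℓ.2⟩
      calc ∑ ℓ ∈ (Q.filter (fun ℓ => ¬ job ℓ = job ℓstar)).filter
            (fun ℓ => es ℓ = es ℓstar), w ℓstar * (b ℓ + c ℓ)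
          ≤ ∑ ℓ ∈ Q.filter (fun ℓ => es ℓ = es ℓstar), w ℓstar * (b ℓ + c ℓ) := by
            apply Finset.sum_le_sum_of_subset_of_nonneg hsub
            intro ℓ _ _
            exact mul_nonneg hw (by nlinarith [(hb ℓ).1, (hc ℓ).1])
        _ = w ℓstar * ((∑ ℓ ∈ Q.filter (fun ℓ => es ℓ = es ℓstar), b ℓ) +
              (∑ ℓ ∈ Q.filter (fun ℓ => es ℓ = es ℓstar), c ℓ)) := by
            rw [← Finset.sum_add_distrib, Finset.mul_sum]
        _ ≤ 2 * w ℓstar := by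
            have hb1 := hQ.1 (es ℓstar)
            have hc1 := hQ.2.1 (es ℓstar)
            nlinarith
    linarith
  -- Lower bound on the S sum
  have hSlb : w ℓstar / 2 ≤ ∑ ℓ ∈ S, decompose b c job es w ℓstar ℓ := by
    by_cases hA : ∃ ℓ ∈ S, job ℓ = job ℓstar
    · obtain ⟨ℓ, hℓS, hℓj⟩ := hA
      have h1 : w ℓstar ≤ ∑ ℓ ∈ S, decompose b c job es w ℓstar ℓ := by
        have := Finset.single_le_sum (f := fun ℓ => decompose b c job es w ℓstar ℓ)
          (fun i _ => hpos i) hℓS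
        simpa [decompose, hℓj] using this
      linarith
    · -- no job match in S
      have hns : ℓstar ∉ S := fun h => hA ⟨ℓstar, h, rfl⟩
      have hinf : ¬ Feasible b c job es (insert ℓstar S) :=
        hblock.resolve_left (fun h => hns h)
      -- key: the (b+c)-mass at es ℓstar in S is at least 1/2
      have hkey : (1:ℝ)/2 ≤ ∑ ℓ ∈ S.filter (fun ℓ => es ℓ = es ℓstar), (b ℓ + c ℓ) := by
        -- a heavy element in the filter suffices
        have hofheavy : (∃ ℓ ∈ S.filter (fun ℓ => es ℓ = es ℓstar), ¬ Light b c ℓ) →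
            (1:ℝ)/2 ≤ ∑ ℓ ∈ S.filter (fun ℓ => es ℓ = es ℓstar), (b ℓ + c ℓ) := by
          rintro ⟨ℓ, hℓ, hLℓ⟩
          have hbc : (1:ℝ)/2 < b ℓ + c ℓ := by
            rw [Light, not_and_or, not_le, not_le] at hLℓ
            rcases hLℓ with h | h
            · nlinarith [(hc ℓ).1]
            · nlinarith [(hb ℓ).1]
          have h2 : b ℓ + c ℓ ≤ ∑ ℓ ∈ S.filter (fun ℓ => es ℓ = es ℓstar),
              (b ℓ + c ℓ) := by
            simpa using Finset.single_le_sum (f := fun ℓ => b ℓ + c ℓ)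
              (fun i _ => (add_pos (hb i).1 (hc i).1).le) hℓ
          linarith
        rw [Feasible, not_and_or, not_and_or] at hinf
        push_neg at hinf
        rcases hinf with ⟨k, hk⟩ | ⟨k, hk⟩ | ⟨j, hj⟩
        · -- bandwidth violation
          have hk' : es ℓstar = k := by
            by_contra h
            rw [Finset.filter_insert, if_neg h] at hk
            exact absurd hk (not_lt.mpr (hS.1 k))
          subst hk'
          rw [Finset.filter_insert, if_pos rfl,
            Finset.sum_insert (fun h => hns (Finset.mem_filter.mp h).1)] at hk
          rcases hcase with hL | ⟨_, hH⟩
          · have hs : ∀ ℓ ∈ S.filter (fun ℓ => es ℓ = es ℓstar), b ℓ ≤ b ℓ + c ℓ :=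
              fun i _ => by nlinarith [(hc i).1]
            have := Finset.sum_le_sum hs
            have hbs := hL.1
            linarith
          · apply hofheavy
            rcases Finset.eq_empty_or_nonempty
                (S.filter (fun ℓ => es ℓ = es ℓstar)) with he | ⟨ℓ, hℓ⟩
            · rw [he, Finset.sum_empty] at hk
              nlinarith [(hb ℓstar).2]
            · exact ⟨ℓ, hℓ, hH ℓ (Finset.mem_filter.mp hℓ).1
                (Finset.mem_filter.mp hℓ).2⟩
        · -- computation violation
          have hk' : es ℓstar = k := by
            by_contra h
            rw [Finset.filter_insert, if_neg h] at hk
            exact absurd hk (not_lt.mpr (hS.2.1 k))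
          subst hk'
          rw [Finset.filter_insert, if_pos rfl,
            Finset.sum_insert (fun h => hns (Finset.mem_filter.mp h).1)] at hk
          rcases hcase with hL | ⟨_, hH⟩
          · have hs : ∀ ℓ ∈ S.filter (fun ℓ => es ℓ = es ℓstar), c ℓ ≤ b ℓ + c ℓ :=
              fun i _ => by nlinarith [(hb i).1]
            have := Finset.sum_le_sum hs
            have hcs := hL.2
            linarith
          · apply hofheavy
            rcases Finset.eq_empty_or_nonempty
                (S.filter (fun ℓ => es ℓ = es ℓstar)) with he | ⟨ℓ, hℓ⟩
            · rw [he, Finset.sum_empty] at hk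
              nlinarith [(hc ℓstar).2]
            · exact ⟨ℓ, hℓ, hH ℓ (Finset.mem_filter.mp hℓ).1
                (Finset.mem_filter.mp hℓ).2⟩
        · -- job violation: impossible under ¬hA
          exfalso
          have hj' : job ℓstar = j := by
            by_contra h
            rw [Finset.filter_insert, if_neg h] at hj
            exact absurd hj (not_lt.mpr (hS.2.2 j))
          rw [Finset.filter_insert, if_pos hj'] at hj
          have hcard := Finset.card_insert_le ℓstar (S.filter (fun ℓ => job ℓ = j))
          have hge : 1 ≤ (S.filter (fun ℓ => job ℓ = j)).card := by omega
          obtain ⟨ℓ, hℓ⟩ := Finset.card_pos.mp hge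
          exact hA ⟨ℓ, (Finset.mem_filter.mp hℓ).1,
            (Finset.mem_filter.mp hℓ).2.trans hj'.symm⟩
      have hsubset : S.filter (fun ℓ => es ℓ = es ℓstar) ⊆ S := Finset.filter_subset _ _
      calc w ℓstar / 2 = w ℓstar * (1/2) := by ring
        _ ≤ w ℓstar * ∑ ℓ ∈ S.filter (fun ℓ => es ℓ = es ℓstar), (b ℓ + c ℓ) :=
            mul_le_mul_of_nonneg_left hkey hw
        _ = ∑ ℓ ∈ S.filter (fun ℓ => es ℓ = es ℓstar), w ℓstar * (b ℓ + c ℓ) :=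
            Finset.mul_sum _ _ _
        _ = ∑ ℓ ∈ S.filter (fun ℓ => es ℓ = es ℓstar),
              decompose b c job es w ℓstar ℓ := by
            apply Finset.sum_congr rfl
            intro ℓ hℓ
            have hes := (Finset.mem_filter.mp hℓ).2
            have hj : ¬ job ℓ = job ℓstar :=
              fun h => hA ⟨ℓ, (Finset.mem_filter.mp hℓ).1, h⟩
            simp [decompose, hj, hes]
        _ ≤ ∑ ℓ ∈ S, decompose b c job es w ℓstar ℓ :=
            Finset.sum_le_sum_of_subset_of_nonneg hsubset (fun i _ _ => hpos i)
  linarith
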